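/- Let G be a topological group admitting an open neighborhood U of the identity such that every element of U other than the identity has infinite order. Then every compact subgroup K of G whose subspace topology is Hausdorff and totally disconnected is virtually torsion-free; that is, K contains a torsion-free subgroup of finite index in K. -/

import Mathlib

/-!
A compact totally disconnected group has a basis of open subgroups at the identity, and open
subgroups of a compact group have finite index. Pulling `U` back to `K` therefore yields an open
subgroup of finite index inside `U`, and it is torsion-free because `U` contains no nontrivial
torsion.
-/

theorem exists_finite_quotient_torsionFree_of_isOpen {G : Type*} [Group G] [TopologicalSpace G]
    [IsTopologicalGroup G] [CompactSpace G] [TotallyDisconnectedSpace G]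
    {U : Set G} (hU : IsOpen U) (h1 : 1 ∈ U) (hUtf : ∀ u ∈ U, IsOfFinOrder u → u = 1) :
    ∃ H : Subgroup G, Finite (G ⧸ H) ∧ ∀ x ∈ H, IsOfFinOrder x → x = 1 := by
  obtain ⟨H, hHU⟩ := ProfiniteGrp.exist_openNormalSubgroup_sub_open_nhds_of_one hU h1
  exact ⟨H.toSubgroup, H.toSubgroup.quotient_finite_of_isOpen H.isOpen,
    fun x hx => hUtf x (hHU hx)⟩

theorem stmt_6_general (G : Type*) [Group G] [TopologicalSpace G] [IsTopologicalGroup G]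
    (U : Set G) (hU : IsOpen U) (h1 : (1 : G) ∈ U)
    (hUtf : ∀ u ∈ U, u ≠ 1 → ¬ IsOfFinOrder u)
    (K : Subgroup G) (hK : IsCompact (K : Set G))
    (htd : TotallyDisconnectedSpace K) :
    ∃ K' : Subgroup K, Finite (K ⧸ K') ∧
      ∀ x : K, x ∈ K' → IsOfFinOrder x → x = 1 := by
  have : CompactSpace K := isCompact_iff_compactSpace.mp hK
  refine exists_finite_quotient_torsionFree_of_isOpen (hU.preimage continuous_subtype_val) h1 ?_
  intro x hxU hx
  by_contra hne
  exact hUtf x hxU (by simpa using hne) (K.subtype.isOfFinOrder hx)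

/-- If a topological group has an open neighborhood of the identity all of
whose non-identity elements have infinite order, then every compact subgroup
whose subspace topology is Hausdorff and totally disconnected is virtually
torsion-free. -/
theorem stmt_6 (G : Type*) [Group G] [TopologicalSpace G] [IsTopologicalGroup G]
    (U : Set G) (hU : IsOpen U) (h1 : (1 : G) ∈ U)
    (hUtf : ∀ u ∈ U, u ≠ 1 → ¬ IsOfFinOrder u)
    (K : Subgroup G) (hK : IsCompact (K : Set G))
    (h2 : T2Space K) (htd : TotallyDisconnectedSpace K) :
    ∃ K' : Subgroup K, Finite (K ⧸ K') ∧
      ∀ x : K, x ∈ K' → IsOfFinOrder x → x = 1 :=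
  stmt_6_general G U hU h1 hUtf K hK htd
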